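/- arXiv:2503.08006 — 2 statements merged into one kernel-verified Lean document; each statement's English description precedes it below -/
import Mathlib

section
/- Let L : ℝⁿ → ℝ be differentiable with H-Lipschitz gradient for some H > 0, let the step size α satisfy 0 < α ≤ 1/H, and let c ∈ [0, 1). If θ ∈ ℝⁿ and d ∈ ℝⁿ satisfy ‖∇L(θ) − d‖ ≤ c‖∇L(θ)‖, then L(θ − αd) − L(θ) ≤ −(α/2)(1 − c²)‖∇L(θ)‖². -/
/-!
Along the segment `t ↦ x + t • v`, the `H`-Lipschitz gradient makes
`f (x + t • v) - t ⟪∇f x, v⟫ - (H/2) ‖v‖² t²` antitone for `t ≥ 0`, which gives the descent lemma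
`f (x + v) ≤ f x + ⟪∇f x, v⟫ + (H/2) ‖v‖²`. With `v = -α d` and `Hα ≤ 1`, the right-hand side
minus `f x` is at most (with `g = ∇f x`) `-α ⟪g, d⟫ + (α/2) ‖d‖² = (α/2) (‖g - d‖² - ‖g‖²)`, and
`‖g - d‖ ≤ c ‖g‖` finishes.
-/

open RealInnerProductSpace

section

variable {E : Type*} [NormedAddCommGroup E] [InnerProductSpace ℝ E] [CompleteSpace E]
  {f : E → ℝ} {H : ℝ}

theorem HasGradientAt.hasDerivAt_comp_add_smul {g x v : E} {t : ℝ}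
    (h : HasGradientAt f g (x + t • v)) :
    HasDerivAt (fun s : ℝ => f (x + s • v)) ⟪g, v⟫ t := by
  have hline : HasDerivAt (fun s : ℝ => x + s • v) v t := by
    simpa using ((hasDerivAt_id t).smul_const v).const_add x
  simpa [Function.comp_def] using h.hasFDerivAt.comp_hasDerivAt t hline

theorem inner_gradient_add_smul_sub_le
    (hlip : ∀ x y, ‖gradient f x - gradient f y‖ ≤ H * ‖x - y‖) (x v : E) {t : ℝ} (ht : 0 ≤ t) :
    ⟪gradient f (x + t • v) - gradient f x, v⟫ ≤ H * t * ‖v‖ ^ 2 :=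
  calc ⟪gradient f (x + t • v) - gradient f x, v⟫
      ≤ ‖gradient f (x + t • v) - gradient f x‖ * ‖v‖ := real_inner_le_norm _ _
    _ ≤ H * ‖(x + t • v) - x‖ * ‖v‖ := by gcongr; exact hlip _ _
    _ = H * t * ‖v‖ ^ 2 := by
      rw [add_sub_cancel_left, norm_smul, Real.norm_of_nonneg ht]; ring

theorem le_add_inner_gradient_add_sq_of_lipschitz (hf : Differentiable ℝ f)
    (hlip : ∀ x y, ‖gradient f x - gradient f y‖ ≤ H * ‖x - y‖) (x v : E) :
    f (x + v) ≤ f x + ⟪gradient f x, v⟫ + H / 2 * ‖v‖ ^ 2 := by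
  set φ : ℝ → ℝ := fun t => f (x + t • v) - t * ⟪gradient f x, v⟫ - H / 2 * ‖v‖ ^ 2 * t ^ 2
  have hφ : ∀ t, HasDerivAt φ
      (⟪gradient f (x + t • v), v⟫ - ⟪gradient f x, v⟫ - H * t * ‖v‖ ^ 2) t := by
    intro t
    have hquad : HasDerivAt (fun s : ℝ => H / 2 * ‖v‖ ^ 2 * s ^ 2) (H * t * ‖v‖ ^ 2) t :=
      ((hasDerivAt_pow 2 t).const_mul (H / 2 * ‖v‖ ^ 2)).congr_deriv (by push_cast; ring)
    exact (((hf _).hasGradientAt.hasDerivAt_comp_add_smul).sub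
      ((hasDerivAt_id t).mul_const _)).sub hquad |>.congr_deriv (by rw [one_mul])
  have hanti : AntitoneOn φ (Set.Ici 0) := by
    refine antitoneOn_of_hasDerivWithinAt_nonpos (convex_Ici 0)
      (fun t _ => (hφ t).continuousAt.continuousWithinAt) (fun t _ => (hφ t).hasDerivWithinAt)
      fun t ht => ?_
    rw [interior_Ici] at ht
    have := inner_gradient_add_smul_sub_le hlip x v ht.le
    rw [inner_sub_left] at this
    linarith
  have hφ01 := hanti Set.self_mem_Ici (zero_le_one' ℝ) zero_le_one
  simp only [φ, one_smul, zero_smul, add_zero] at hφ01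
  linarith

end

theorem cagrad_one_step_descent_general {n : ℕ} (L : EuclideanSpace ℝ (Fin n) → ℝ) (H α c : ℝ)
    (hH : 0 < H) (hα : 0 < α) (hαH : α ≤ 1 / H)
    (hdiff : Differentiable ℝ L)
    (hlip : ∀ x y : EuclideanSpace ℝ (Fin n),
      ‖gradient L x - gradient L y‖ ≤ H * ‖x - y‖)
    (θ d : EuclideanSpace ℝ (Fin n))
    (hd : ‖gradient L θ - d‖ ≤ c * ‖gradient L θ‖) :
    L (θ - α • d) - L θ ≤ -(α / 2) * (1 - c ^ 2) * ‖gradient L θ‖ ^ 2 := by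
  set g := gradient L θ
  have hdesc := le_add_inner_gradient_add_sq_of_lipschitz hdiff hlip θ (-(α • d))
  rw [← sub_eq_add_neg, inner_neg_right, real_inner_smul_right, norm_neg, norm_smul,
    Real.norm_of_nonneg hα.le] at hdesc
  have hHα : H * α ≤ 1 := by rwa [le_div_iff₀ hH, mul_comm] at hαH
  have hgd : ‖g - d‖ ^ 2 ≤ c ^ 2 * ‖g‖ ^ 2 := by
    rw [← mul_pow]; exact pow_le_pow_left₀ (norm_nonneg _) hd 2
  calc L (θ - α • d) - L θ ≤ -(α * ⟪g, d⟫) + (H * α) * α / 2 * ‖d‖ ^ 2 := by linarith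
    _ ≤ -(α * ⟪g, d⟫) + 1 * α / 2 * ‖d‖ ^ 2 := by gcongr
    _ = α / 2 * (‖g - d‖ ^ 2 - ‖g‖ ^ 2) := by rw [norm_sub_sq_real]; ring
    _ ≤ α / 2 * (c ^ 2 * ‖g‖ ^ 2 - ‖g‖ ^ 2) := by gcongr
    _ = -(α / 2) * (1 - c ^ 2) * ‖g‖ ^ 2 := by ring

/-- Per-iteration descent guarantee of CAGrad: if `∇L` is `H`-Lipschitz, `0 < α ≤ 1/H`,
`0 ≤ c < 1`, and `‖∇L θ - d‖ ≤ c ‖∇L θ‖`, then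
`L (θ - α d) - L θ ≤ -(α/2)(1 - c²) ‖∇L θ‖²`. -/
theorem cagrad_one_step_descent {n : ℕ} (L : EuclideanSpace ℝ (Fin n) → ℝ) (H α c : ℝ)
    (hH : 0 < H) (hα : 0 < α) (hαH : α ≤ 1 / H) (hc0 : 0 ≤ c) (hc1 : c < 1)
    (hdiff : Differentiable ℝ L)
    (hlip : ∀ x y : EuclideanSpace ℝ (Fin n),
      ‖gradient L x - gradient L y‖ ≤ H * ‖x - y‖)
    (θ d : EuclideanSpace ℝ (Fin n))
    (hd : ‖gradient L θ - d‖ ≤ c * ‖gradient L θ‖) :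
    L (θ - α • d) - L θ ≤ -(α / 2) * (1 - c ^ 2) * ‖gradient L θ‖ ^ 2 :=
  cagrad_one_step_descent_general L H α c hH hα hαH hdiff hlip θ d hd
end

section
/- (Convergence of CAGrad, minimum-gradient form.) Let L : ℝⁿ → ℝ be differentiable with H-Lipschitz gradient for some H > 0, let 0 < α ≤ 1/H and c ∈ [0, 1). Let (θₜ)ₜ≥0 be a sequence in ℝⁿ and (dₜ)ₜ≥0 directions with θₜ₊₁ = θₜ − α dₜ and ‖∇L(θₜ) − dₜ‖ ≤ c‖∇L(θₜ)‖ for every t. Then for every T ≥ 0, min_{0 ≤ t ≤ T} ‖∇L(θₜ)‖² ≤ 2(L(θ₀) − L(θ_{T+1})) / (α(1 − c²)(T + 1)). -/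
/-!
A gradient that is `H`-Lipschitz gives the descent lemma
`L y ≤ L x + ⟪∇L x, y - x⟫ + H/2 ‖y - x‖²`. For the step `y = x - α d` with `H α ≤ 1`, the
identity `-2⟪g, d⟫ + ‖d‖² = ‖g - d‖² - ‖g‖²` and `‖g - d‖ ≤ c ‖g‖` show that each step lowers
`L` by at least `α (1 - c²)/2 ‖∇L θₜ‖²`. Summing telescopes, and the minimum is at most the
average.
-/

open RealInnerProductSpace

section Descent

variable {E : Type*} [NormedAddCommGroup E] [InnerProductSpace ℝ E] [CompleteSpace E]
  {L : E → ℝ}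

theorem hasDerivAt_apply_add_smul {x v : E} {t : ℝ} (hL : DifferentiableAt ℝ L (x + t • v)) :
    HasDerivAt (fun s : ℝ => L (x + s • v)) ⟪gradient L (x + t • v), v⟫ t := by
  have hline : HasDerivAt (fun s : ℝ => x + s • v) v t := by
    simpa using ((hasDerivAt_id t).smul_const v).const_add x
  exact (hL.hasGradientAt.hasFDerivAt.comp_hasDerivAt t hline).congr_deriv (by simp)

theorem le_add_inner_gradient_add_half_mul_norm_sq {H : ℝ} (hL : Differentiable ℝ L)
    (hlip : ∀ x y : E, ‖gradient L x - gradient L y‖ ≤ H * ‖x - y‖) (x y : E) :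
    L y ≤ L x + ⟪gradient L x, y - x⟫ + H / 2 * ‖y - x‖ ^ 2 := by
  set v := y - x
  set ψ : ℝ → ℝ := fun t => L (x + t • v) - t * ⟪gradient L x, v⟫ - H / 2 * t ^ 2 * ‖v‖ ^ 2
  have hψ' (t : ℝ) : HasDerivAt ψ
      (⟪gradient L (x + t • v), v⟫ - ⟪gradient L x, v⟫ - H * t * ‖v‖ ^ 2) t := by
    have hlin : HasDerivAt (fun s : ℝ => s * ⟪gradient L x, v⟫) ⟪gradient L x, v⟫ t := by
      simpa using (hasDerivAt_id t).mul_const ⟪gradient L x, v⟫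
    have hsq : HasDerivAt (fun s : ℝ => H / 2 * s ^ 2 * ‖v‖ ^ 2) (H * t * ‖v‖ ^ 2) t :=
      ((hasDerivAt_pow 2 t).const_mul (H / 2)).mul_const (‖v‖ ^ 2) |>.congr_deriv
        (by rw [Nat.add_one_sub_one, pow_one, Nat.cast_ofNat]; ring)
    exact ((hasDerivAt_apply_add_smul (hL _)).sub hlin).sub hsq
  have hψ'_nonpos (t : ℝ) (ht : 0 ≤ t) :
      ⟪gradient L (x + t • v), v⟫ - ⟪gradient L x, v⟫ - H * t * ‖v‖ ^ 2 ≤ 0 := by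
    have := calc ⟪gradient L (x + t • v) - gradient L x, v⟫
        ≤ ‖gradient L (x + t • v) - gradient L x‖ * ‖v‖ := real_inner_le_norm _ _
      _ ≤ H * ‖x + t • v - x‖ * ‖v‖ := by gcongr; exact hlip _ _
      _ = H * t * ‖v‖ ^ 2 := by
        rw [add_sub_cancel_left, norm_smul, Real.norm_of_nonneg ht]; ring
    rw [inner_sub_left] at this
    linarith
  have hψ_anti : AntitoneOn ψ (Set.Icc 0 1) := by
    have hψ_diff : Differentiable ℝ ψ := fun t => (hψ' t).differentiableAt
    refine antitoneOn_of_deriv_nonpos (convex_Icc 0 1) hψ_diff.continuous.continuousOn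
      hψ_diff.differentiableOn fun t ht => ?_
    rw [(hψ' t).deriv]
    exact hψ'_nonpos t (interior_subset ht).1
  have hψ01 : ψ 1 ≤ ψ 0 :=
    hψ_anti (Set.left_mem_Icc.2 zero_le_one) (Set.right_mem_Icc.2 zero_le_one) zero_le_one
  simp only [ψ, v, one_smul, add_sub_cancel, zero_smul, add_zero] at hψ01
  linarith

theorem apply_sub_smul_le_of_norm_gradient_sub_le {H α c : ℝ} (hL : Differentiable ℝ L)
    (hlip : ∀ x y : E, ‖gradient L x - gradient L y‖ ≤ H * ‖x - y‖)
    (hα : 0 ≤ α) (hHα : H * α ≤ 1) {x d : E} (hd : ‖gradient L x - d‖ ≤ c * ‖gradient L x‖) :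
    L (x - α • d) ≤ L x - α * (1 - c ^ 2) / 2 * ‖gradient L x‖ ^ 2 := by
  set g := gradient L x
  have hdescent := le_add_inner_gradient_add_half_mul_norm_sq hL hlip x (x - α • d)
  rw [sub_sub_cancel_left, inner_neg_right, real_inner_smul_right, norm_neg, norm_smul,
    Real.norm_of_nonneg hα] at hdescent
  have hstep : H / 2 * (α * ‖d‖) ^ 2 ≤ α / 2 * ‖d‖ ^ 2 := by
    have := mul_le_mul_of_nonneg_right hHα (by positivity : 0 ≤ α * ‖d‖ ^ 2)
    nlinarith
  have hsq : ‖g - d‖ ^ 2 ≤ c ^ 2 * ‖g‖ ^ 2 := by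
    rw [← mul_pow]; exact pow_le_pow_left₀ (norm_nonneg _) hd 2
  have := norm_sub_sq_real g d
  nlinarith

end Descent

/-- Convergence of CAGrad, minimum-gradient form:
`min_{0 ≤ t ≤ T} ‖∇L θₜ‖² ≤ 2 (L θ₀ - L θ_{T+1}) / (α (1 - c²) (T + 1))`. -/
theorem cagrad_convergence_min {n : ℕ} (L : EuclideanSpace ℝ (Fin n) → ℝ) (H α c : ℝ)
    (hH : 0 < H) (hα : 0 < α) (hαH : α ≤ 1 / H) (hc0 : 0 ≤ c) (hc1 : c < 1)
    (hdiff : Differentiable ℝ L)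
    (hlip : ∀ x y : EuclideanSpace ℝ (Fin n),
      ‖gradient L x - gradient L y‖ ≤ H * ‖x - y‖)
    (θ d : ℕ → EuclideanSpace ℝ (Fin n))
    (hupd : ∀ t : ℕ, θ (t + 1) = θ t - α • d t)
    (hd : ∀ t : ℕ, ‖gradient L (θ t) - d t‖ ≤ c * ‖gradient L (θ t)‖) :
    ∀ T : ℕ, (Finset.range (T + 1)).inf' Finset.nonempty_range_add_one
        (fun t => ‖gradient L (θ t)‖ ^ 2) ≤
      2 * (L (θ 0) - L (θ (T + 1))) / (α * (1 - c ^ 2) * (T + 1)) := by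
  intro T
  set g : ℕ → ℝ := fun t => ‖gradient L (θ t)‖ ^ 2
  have hHα : H * α ≤ 1 := by rwa [le_div_iff₀ hH, mul_comm] at hαH
  have hc : 0 < 1 - c ^ 2 := by nlinarith
  have hstep (t : ℕ) : α * (1 - c ^ 2) / 2 * g t ≤ L (θ t) - L (θ (t + 1)) := by
    have := apply_sub_smul_le_of_norm_gradient_sub_le hdiff hlip hα.le hHα (hd t)
    rw [hupd]; linarith
  have hsum : α * (1 - c ^ 2) / 2 * ∑ t ∈ Finset.range (T + 1), g t ≤
      L (θ 0) - L (θ (T + 1)) := by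
    rw [Finset.mul_sum, ← Finset.sum_range_sub' (fun t => L (θ t))]
    exact Finset.sum_le_sum fun t _ => hstep t
  have hmin : (T + 1 : ℝ) * (Finset.range (T + 1)).inf' Finset.nonempty_range_add_one g ≤
      ∑ t ∈ Finset.range (T + 1), g t := by
    simpa [nsmul_eq_mul] using Finset.card_nsmul_le_sum _ g _ fun t ht =>
      (Finset.inf'_le g ht : (Finset.range (T + 1)).inf' Finset.nonempty_range_add_one g ≤ g t)
  rw [le_div_iff₀ (by positivity)]
  nlinarith [mul_le_mul_of_nonneg_left hmin (by positivity : 0 ≤ α * (1 - c ^ 2) / 2)]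
end
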